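/- arXiv:2507.20653 — 4 statements merged into one kernel-verified Lean document; each statement's English description precedes it below -/
import Mathlib

section
/- Let (a(k))_{k≥1}, (λ(k))_{k≥0}, (μ(k))_{k≥0}, (a'(k))_{k≥1}, (λ'(k))_{k≥0} be sequences of complex numbers with λ(0) = λ'(0) = μ(0) = 1, satisfying the recursions ν·μ(ν) = −∑_{l=1}^{ν} a(l) μ(ν−l), ν·λ(ν) = ∑_{l=1}^{ν} A(l) λ(ν−l), and ν·λ'(ν) = ∑_{l=1}^{ν} A'(l) λ'(ν−l) for all ν ≥ 1, where A(k), A'(k) are non-negative reals and |a(k)|² ≤ A(k)·A'(k) for all k ≥ 1, and λ(k), λ'(k) ≥ 0 for all k. Then |μ(ν)|² ≤ λ(ν)·λ'(ν) for all ν ≥ 0. -/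
/-!
Strong induction on `ν`. The recursion for `μ` and the triangle inequality give
`ν ‖μ ν‖ ≤ ∑ ‖a l‖ ‖μ (ν - l)‖`. Each summand is at most `√(A l λ(ν-l)) · √(A' l λ'(ν-l))`
by the hypothesis on `a` and the induction hypothesis, so Cauchy–Schwarz bounds the square of
the sum by `(∑ A l λ(ν-l)) (∑ A' l λ'(ν-l)) = (ν λ ν)(ν λ' ν)`.
-/

open Finset

theorem Finset.sq_sum_mul_le_sum_mul_mul_sum_mul {ι R : Type*} [CommRing R] [LinearOrder R]
    [IsStrictOrderedRing R] (s : Finset ι) {u v f f' g g' : ι → R}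
    (hf : ∀ i ∈ s, 0 ≤ f i) (hf' : ∀ i ∈ s, 0 ≤ f' i)
    (hg : ∀ i ∈ s, 0 ≤ g i) (hg' : ∀ i ∈ s, 0 ≤ g' i)
    (hu : ∀ i ∈ s, u i ^ 2 ≤ f i * f' i) (hv : ∀ i ∈ s, v i ^ 2 ≤ g i * g' i) :
    (∑ i ∈ s, u i * v i) ^ 2 ≤ (∑ i ∈ s, f i * g i) * ∑ i ∈ s, f' i * g' i := by
  refine sum_sq_le_sum_mul_sum_of_sq_le_mul s (fun i hi => mul_nonneg (hf i hi) (hg i hi))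
    (fun i hi => mul_nonneg (hf' i hi) (hg' i hi)) fun i hi => ?_
  calc (u i * v i) ^ 2 = u i ^ 2 * v i ^ 2 := mul_pow _ _ _
    _ ≤ (f i * f' i) * (g i * g' i) :=
      mul_le_mul (hu i hi) (hv i hi) (sq_nonneg _) (mul_nonneg (hf i hi) (hf' i hi))
    _ = f i * g i * (f' i * g' i) := by ring

theorem stmt_2 (a μ : ℕ → ℂ) (lam lam' A A' : ℕ → ℝ)
    (hlam0 : lam 0 = 1) (hlam'0 : lam' 0 = 1) (hμ0 : μ 0 = 1)
    (hA : ∀ k, 1 ≤ k → 0 ≤ A k) (hA' : ∀ k, 1 ≤ k → 0 ≤ A' k)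
    (ha : ∀ k, 1 ≤ k → ‖a k‖ ^ 2 ≤ A k * A' k)
    (hlam : ∀ k, 0 ≤ lam k) (hlam' : ∀ k, 0 ≤ lam' k)
    (hrecμ : ∀ ν : ℕ, 1 ≤ ν → (ν : ℂ) * μ ν = -∑ l ∈ Finset.Icc 1 ν, a l * μ (ν - l))
    (hrecl : ∀ ν : ℕ, 1 ≤ ν → (ν : ℝ) * lam ν = ∑ l ∈ Finset.Icc 1 ν, A l * lam (ν - l))
    (hrecl' : ∀ ν : ℕ, 1 ≤ ν → (ν : ℝ) * lam' ν = ∑ l ∈ Finset.Icc 1 ν, A' l * lam' (ν - l)) :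
    ∀ ν, ‖μ ν‖ ^ 2 ≤ lam ν * lam' ν := by
  intro ν
  induction ν using Nat.strong_induction_on with
  | _ ν ih =>
  rcases Nat.eq_zero_or_pos ν with rfl | hν
  · simp [hμ0, hlam0, hlam'0]
  have htriangle : (ν : ℝ) * ‖μ ν‖ ≤ ∑ l ∈ Icc 1 ν, ‖a l‖ * ‖μ (ν - l)‖ := by
    calc (ν : ℝ) * ‖μ ν‖ = ‖∑ l ∈ Icc 1 ν, a l * μ (ν - l)‖ := by
          rw [← Complex.norm_natCast, ← norm_mul, hrecμ ν hν, norm_neg]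
      _ ≤ _ := norm_sum_le_of_le _ fun l _ => norm_mul_le _ _
  have hcs : (∑ l ∈ Icc 1 ν, ‖a l‖ * ‖μ (ν - l)‖) ^ 2 ≤ (ν * lam ν) * (ν * lam' ν) := by
    rw [hrecl ν hν, hrecl' ν hν]
    exact sq_sum_mul_le_sum_mul_mul_sum_mul _
      (fun l hl => hA l (mem_Icc.1 hl).1) (fun l hl => hA' l (mem_Icc.1 hl).1)
      (fun l _ => hlam _) (fun l _ => hlam' _)
      (fun l hl => ha l (mem_Icc.1 hl).1) fun l hl => ih _ (by have := (mem_Icc.1 hl).1; omega)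
  have hscaled : (ν : ℝ) ^ 2 * ‖μ ν‖ ^ 2 ≤ (ν : ℝ) ^ 2 * (lam ν * lam' ν) :=
    calc (ν : ℝ) ^ 2 * ‖μ ν‖ ^ 2 = ((ν : ℝ) * ‖μ ν‖) ^ 2 := by ring
      _ ≤ (∑ l ∈ Icc 1 ν, ‖a l‖ * ‖μ (ν - l)‖) ^ 2 := by gcongr
      _ ≤ (ν * lam ν) * (ν * lam' ν) := hcs
      _ = (ν : ℝ) ^ 2 * (lam ν * lam' ν) := by ring
  exact le_of_mul_le_mul_left hscaled (by positivity)
end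

section
/- Suppose D : [σ₀, ∞) → ℝ_{≥0} is non-increasing and satisfies D(σ)² ≤ C^ε · D(σ − ε/k) for all σ with σ − ε/k ≥ σ₀, where C ≥ 2, k ≥ 1 and ε > 0 are fixed, and suppose D(σ₀) ≤ C^B for some B > 0. Then for any σ ≥ σ₀ + l·ε/k with l = ⌈log₂(B/ε)⌉, we have D(σ) ≤ C^{2ε}. -/
/-!
Squaring the bound at each step: if `D ≤ b` from `σ₀` on and `D(τ)² ≤ a · D(τ - h)`, then
`D(τ)^(2^n) ≤ a^(2^n - 1) · b` once `τ ≥ σ₀ + n h`. With `a = C^ε`, `b = C^B` and `2^l ≥ B/ε` the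
right-hand side is at most `(C^ε)^(2^(l+1)) = (C^(2ε))^(2^l)`, and taking `2^l`-th roots gives `C^(2ε)`.
-/

open Real

theorem pow_two_pow_le_of_sq_le_mul {D : ℝ → ℝ} {σ₀ h a b : ℝ} (hh : 0 ≤ h) (ha : 0 ≤ a)
    (hbase : ∀ τ, σ₀ ≤ τ → D τ ≤ b)
    (hsq : ∀ τ, σ₀ ≤ τ - h → D τ ^ 2 ≤ a * D (τ - h)) :
    ∀ (n : ℕ) (τ : ℝ), σ₀ + n * h ≤ τ → D τ ^ 2 ^ n ≤ a ^ (2 ^ n - 1) * b := by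
  intro n
  induction n with
  | zero =>
    intro τ hτ
    simpa using hbase τ (by simpa using hτ)
  | succ n ih =>
    intro τ hτ
    have hτh : σ₀ + n * h ≤ τ - h := by push_cast at hτ; linarith
    have hexp : 2 ^ n + (2 ^ n - 1) = 2 ^ (n + 1) - 1 := by
      have := Nat.one_le_two_pow (n := n); rw [pow_succ]; omega
    calc D τ ^ 2 ^ (n + 1) = (D τ ^ 2) ^ 2 ^ n := by rw [← pow_mul, pow_succ']
      _ ≤ (a * D (τ - h)) ^ 2 ^ n :=
          pow_le_pow_left₀ (sq_nonneg _) (hsq τ ((le_add_of_nonneg_right (by positivity)).trans hτh)) _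
      _ = a ^ 2 ^ n * D (τ - h) ^ 2 ^ n := mul_pow _ _ _
      _ ≤ a ^ 2 ^ n * (a ^ (2 ^ n - 1) * b) := by gcongr; exact ih _ hτh
      _ = a ^ (2 ^ (n + 1) - 1) * b := by rw [← mul_assoc, ← pow_add, hexp]

theorem le_pow_ceil_logb {b : ℝ} (hb : 1 < b) (x : ℝ) : x ≤ b ^ ⌈logb b x⌉₊ := by
  rcases le_or_gt x 0 with hx | hx
  · exact hx.trans (by positivity)
  · rw [← rpow_natCast, ← logb_le_iff_le_rpow hb hx]
    exact Nat.le_ceil _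

theorem le_sq_of_pow_two_pow_le {x c d : ℝ} {l : ℕ} (hc : 1 ≤ c)
    (hx : x ^ 2 ^ l ≤ c ^ (2 ^ l - 1) * d) (hd : d ≤ c ^ 2 ^ l) : x ≤ c ^ 2 := by
  refine le_of_pow_le_pow_left₀ (n := 2 ^ l) (by positivity) (by positivity) ?_
  calc x ^ 2 ^ l ≤ c ^ (2 ^ l - 1) * d := hx
    _ ≤ c ^ (2 ^ l - 1) * c ^ 2 ^ l := by gcongr
    _ ≤ c ^ 2 ^ l * c ^ 2 ^ l := by gcongr; exact Nat.sub_le _ _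
    _ = (c ^ 2) ^ 2 ^ l := by rw [← mul_pow, sq]

theorem stmt_9_general (D : ℝ → ℝ) (σ₀ C B ε : ℝ) (k : ℕ)
    (hC : 2 ≤ C) (hε : 0 < ε)
    (hmono : ∀ σ τ, σ₀ ≤ σ → σ ≤ τ → D τ ≤ D σ)
    (hiter : ∀ σ, σ₀ ≤ σ - ε / k → D σ ^ 2 ≤ C ^ ε * D (σ - ε / k))
    (hinit : D σ₀ ≤ C ^ B) :
    ∀ σ, σ₀ + (⌈Real.logb 2 (B / ε)⌉₊ : ℝ) * (ε / k) ≤ σ → D σ ≤ C ^ (2 * ε) := by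
  intro σ hσ
  set l := ⌈logb 2 (B / ε)⌉₊
  have hC1 : 1 ≤ C := by linarith
  have hiterated := pow_two_pow_le_of_sq_le_mul (by positivity) (by positivity)
    (fun τ hτ => (hmono σ₀ τ le_rfl hτ).trans hinit) hiter l σ hσ
  have hBl : B ≤ ε * 2 ^ l := by
    rw [← div_le_iff₀' hε]
    exact le_pow_ceil_logb one_lt_two _
  have hCB : C ^ B ≤ (C ^ ε) ^ 2 ^ l := by
    rw [← rpow_natCast, ← rpow_mul (by positivity)]
    exact rpow_le_rpow_of_exponent_le hC1 (by exact_mod_cast hBl)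
  rw [mul_comm, rpow_mul (by positivity), rpow_two]
  exact le_sq_of_pow_two_pow_le (one_le_rpow hC1 hε.le) hiterated hCB

theorem stmt_9 (D : ℝ → ℝ) (σ₀ C B ε : ℝ) (k : ℕ) (hk : 1 ≤ k)
    (hC : 2 ≤ C) (hε : 0 < ε) (hB : 0 < B)
    (hnonneg : ∀ σ, σ₀ ≤ σ → 0 ≤ D σ)
    (hmono : ∀ σ τ, σ₀ ≤ σ → σ ≤ τ → D τ ≤ D σ)
    (hiter : ∀ σ, σ₀ ≤ σ - ε / k → D σ ^ 2 ≤ C ^ ε * D (σ - ε / k))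
    (hinit : D σ₀ ≤ C ^ B) :
    ∀ σ, σ₀ + (⌈Real.logb 2 (B / ε)⌉₊ : ℝ) * (ε / k) ≤ σ → D σ ≤ C ^ (2 * ε) :=
  stmt_9_general D σ₀ C B ε k hC hε hmono hiter hinit
end

section
/- Let (λ(k))_{k≥0} be non-negative reals with λ(0) = 1, and suppose |λ(k)| ≤ x^{k·2δ} with x ≥ 2 and 0 ≤ δ ≤ 1/2 − 1/(N+1). If for distinct square-free data the multiplicativity relation λ(n₁^k)λ(n₂^k) = λ(d^k)²·λ(n₁^k n₂^k / d^{2k}) holds with d = gcd(n₁,n₂), then (∑_n μ²(n)λ(n^k) n^{−kσ})² ≤ (∑_d μ²(d) λ(d^k)² d^{−2kσ}) · (∑_n μ²(n) d(n) λ(n^k) n^{−kσ}), where d(n) is the divisor function. [Over ℤ for concreteness.] -/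
/-!
Expand the square as a double sum over pairs `(n₁, n₂)` of square-free integers. With
`d = gcd n₁ n₂` and `m = n₁ n₂ / d²`, multiplicativity turns the term of the pair into
`λ(d^k)² d^{-2kσ} · λ(m^k) m^{-kσ}`, and the pair is recovered from `(d, m, n₁ / d)`, where
`n₁ / d` is a divisor of `m`. So the double sum injects into the sum over triples `(d, m, e)`
with `e ∣ m`, which factors as the product on the right, the divisor function counting `e`.
-/

namespace Nat

theorem gcd_sq_dvd_mul (n₁ n₂ : ℕ) : gcd n₁ n₂ ^ 2 ∣ n₁ * n₂ :=
  sq (gcd n₁ n₂) ▸ mul_dvd_mul (gcd_dvd_left n₁ n₂) (gcd_dvd_right n₁ n₂)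

theorem mul_div_gcd_sq_eq (n₁ n₂ : ℕ) :
    n₁ * n₂ / gcd n₁ n₂ ^ 2 = n₁ / gcd n₁ n₂ * (n₂ / gcd n₁ n₂) := by
  rw [Nat.div_mul_div_comm (gcd_dvd_left _ _) (gcd_dvd_right _ _), sq]

theorem squarefree_mul_div_gcd_sq {n₁ n₂ : ℕ} (h₁ : Squarefree n₁) (h₂ : Squarefree n₂) :
    Squarefree (n₁ * n₂ / gcd n₁ n₂ ^ 2) := by
  have hd : 0 < gcd n₁ n₂ := gcd_pos_of_pos_left _ (pos_of_ne_zero h₁.ne_zero)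
  rw [mul_div_gcd_sq_eq, squarefree_mul (coprime_div_gcd_div_gcd hd)]
  exact ⟨h₁.squarefree_of_dvd (div_dvd_of_dvd (gcd_dvd_left _ _)),
    h₂.squarefree_of_dvd (div_dvd_of_dvd (gcd_dvd_right _ _))⟩

theorem div_gcd_mem_divisors_mul_div_gcd_sq {n₁ n₂ : ℕ} (h₁ : n₁ ≠ 0) (h₂ : n₂ ≠ 0) :
    n₁ / gcd n₁ n₂ ∈ (n₁ * n₂ / gcd n₁ n₂ ^ 2).divisors := by
  have hd : 0 < gcd n₁ n₂ := gcd_pos_of_pos_left _ (pos_of_ne_zero h₁)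
  rw [mul_div_gcd_sq_eq, mem_divisors]
  refine ⟨dvd_mul_right _ _, mul_ne_zero ?_ ?_⟩
  · exact (Nat.div_pos (le_of_dvd (pos_of_ne_zero h₁) (gcd_dvd_left _ _)) hd).ne'
  · exact (Nat.div_pos (le_of_dvd (pos_of_ne_zero h₂) (gcd_dvd_right _ _)) hd).ne'

theorem injective_gcd_mul_div_gcd_sq_div_gcd :
    Function.Injective fun p : ℕ × ℕ =>
      ((gcd p.1 p.2, p.1 * p.2 / gcd p.1 p.2 ^ 2), p.1 / gcd p.1 p.2) := by
  rintro ⟨n₁, n₂⟩ ⟨m₁, m₂⟩ h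
  simp only [Prod.mk.injEq] at h
  obtain ⟨⟨hd, hm⟩, he⟩ := h
  have hn₁ : n₁ = m₁ := by
    rw [← Nat.div_mul_cancel (gcd_dvd_left n₁ n₂), ← Nat.div_mul_cancel (gcd_dvd_left m₁ m₂),
      he, hd]
  subst hn₁
  rcases eq_or_ne n₁ 0 with rfl | hn₁
  · simpa using hd
  have hprod : n₁ * n₂ = n₁ * m₂ := by
    rw [← Nat.div_mul_cancel (gcd_sq_dvd_mul n₁ n₂), ← Nat.div_mul_cancel (gcd_sq_dvd_mul n₁ m₂),
      hm, hd]
  simpa using (Nat.eq_of_mul_eq_mul_left (pos_of_ne_zero hn₁) hprod)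

end Nat

theorem hasSum_ite_mem_of_hasSum_card_mul {α β : Type*} [DecidableEq β] (s : α → Finset β)
    {f : α → ℝ} (hf : 0 ≤ f) {S : ℝ} (hS : HasSum (fun x => (s x).card * f x) S) :
    HasSum (fun q : α × β => if q.2 ∈ s q.1 then f q.1 else 0) S := by
  have hfiber : ∀ x, HasSum (fun y => if y ∈ s x then f x else 0) ((s x).card * f x) := by
    intro x
    convert hasSum_sum_of_ne_finset_zero (L := SummationFilter.unconditional β) (s := s x)
      (fun y hy => if_neg hy) using 1
    simp
  have hnonneg : 0 ≤ fun q : α × β => if q.2 ∈ s q.1 then f q.1 else 0 := fun q => by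
    dsimp only; split_ifs; exacts [hf q.1, le_rfl]
  have hsum : Summable fun q : α × β => if q.2 ∈ s q.1 then f q.1 else 0 :=
    (summable_prod_of_nonneg hnonneg).2
      ⟨fun x => (hfiber x).summable, by simpa only [(hfiber _).tsum_eq] using hS.summable⟩
  convert hsum.hasSum using 1
  rw [hsum.tsum_prod' fun x => (hfiber x).summable]
  simp only [(hfiber _).tsum_eq, hS.tsum_eq]

theorem sq_tsum_le_tsum_mul_tsum_card_divisors_mul {a b : ℕ → ℝ} (ha : 0 ≤ a) (hb : 0 ≤ b)
    (ha₀ : a 0 = 0)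
    (hfac : ∀ n₁ n₂, a n₁ * a n₂ ≤ b (Nat.gcd n₁ n₂) * a (n₁ * n₂ / Nat.gcd n₁ n₂ ^ 2))
    (hb_sum : Summable b) (hτa : Summable fun n => (n.divisors.card : ℝ) * a n) :
    (∑' n, a n) ^ 2 ≤ (∑' n, b n) * ∑' n, (n.divisors.card : ℝ) * a n := by
  have ha_sum : Summable a := hτa.of_nonneg_of_le ha fun n => by
    rcases eq_or_ne n 0 with rfl | hn
    · simp [ha₀]
    · exact le_mul_of_one_le_left (ha n) (by
        exact_mod_cast Finset.card_pos.mpr ⟨n, Nat.mem_divisors_self n hn⟩)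
  have hbτa : HasSum (fun p : ℕ × ℕ => (p.2.divisors.card : ℝ) * (b p.1 * a p.2))
      ((∑' n, b n) * ∑' n, (n.divisors.card : ℝ) * a n) := by
    have hnonneg : 0 ≤ fun n => (n.divisors.card : ℝ) * a n := fun n =>
      mul_nonneg (by positivity) (ha n)
    simpa only [mul_left_comm] using
      hb_sum.hasSum.mul hτa.hasSum (hb_sum.mul_of_nonneg hτa hb hnonneg)
  have hG := hasSum_ite_mem_of_hasSum_card_mul (fun p : ℕ × ℕ => p.2.divisors)
    (fun p => mul_nonneg (hb p.1) (ha p.2)) hbτa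
  have haa := ha_sum.mul_of_nonneg ha_sum ha ha
  rw [← hG.tsum_eq, sq, (ha_sum.hasSum.mul ha_sum.hasSum haa).tsum_eq.symm]
  refine Summable.tsum_le_tsum_of_inj _ Nat.injective_gcd_mul_div_gcd_sq_div_gcd
    (fun q _ => ?_) (fun p => ?_) haa hG.summable
  · dsimp only; split_ifs <;> simp [mul_nonneg (hb _) (ha _)]
  · obtain ⟨n₁, n₂⟩ := p
    by_cases h : n₁ ≠ 0 ∧ n₂ ≠ 0
    · simpa [Nat.div_gcd_mem_divisors_mul_div_gcd_sq h.1 h.2] using hfac n₁ n₂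
    · obtain rfl | rfl : n₁ = 0 ∨ n₂ = 0 := by tauto
      all_goals simp only [ha₀, zero_mul, mul_zero]; split_ifs <;> simp [mul_nonneg (hb _) (ha _)]

theorem Real.natCast_rpow_mul_natCast_rpow_of_mul_eq {x y d m : ℕ} (h : x * y = d ^ 2 * m)
    (t : ℝ) :
    (x : ℝ) ^ t * (y : ℝ) ^ t = (d : ℝ) ^ (2 * t) * (m : ℝ) ^ t := by
  rw [← Real.mul_rpow (by positivity) (by positivity), ← Nat.cast_mul, h, Nat.cast_mul,
    Real.mul_rpow (by positivity) (by positivity), Nat.cast_pow, ← Real.rpow_natCast,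
    ← Real.rpow_mul (by positivity), Nat.cast_ofNat]

section SquarefreeWeights

variable (lam : ℕ → ℝ) (k : ℕ) (σ : ℝ)

noncomputable def sqfreeWeight (n : ℕ) : ℝ :=
  if Squarefree n then lam (n ^ k) * (n : ℝ) ^ (-((k : ℝ) * σ)) else 0

noncomputable def sqfreeWeightSq (d : ℕ) : ℝ :=
  if Squarefree d then lam (d ^ k) ^ 2 * (d : ℝ) ^ (-((2 * k : ℝ) * σ)) else 0

variable {lam k σ}

theorem sqfreeWeight_nonneg (hnonneg : ∀ n, 0 ≤ lam n) (n : ℕ) :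
    0 ≤ sqfreeWeight lam k σ n := by
  unfold sqfreeWeight; split_ifs
  exacts [mul_nonneg (hnonneg _) (by positivity), le_rfl]

theorem sqfreeWeightSq_nonneg (d : ℕ) : 0 ≤ sqfreeWeightSq lam k σ d := by
  unfold sqfreeWeightSq; split_ifs
  exacts [by positivity, le_rfl]

theorem sqfreeWeight_mul_eq
    (hmult : ∀ n₁ n₂ : ℕ, Squarefree n₁ → Squarefree n₂ →
      lam (n₁ ^ k) * lam (n₂ ^ k) =
        lam (Nat.gcd n₁ n₂ ^ k) ^ 2 * lam (n₁ ^ k * n₂ ^ k / Nat.gcd n₁ n₂ ^ (2 * k)))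
    {n₁ n₂ : ℕ} (h₁ : Squarefree n₁) (h₂ : Squarefree n₂) :
    sqfreeWeight lam k σ n₁ * sqfreeWeight lam k σ n₂ =
      sqfreeWeightSq lam k σ (Nat.gcd n₁ n₂) *
        sqfreeWeight lam k σ (n₁ * n₂ / Nat.gcd n₁ n₂ ^ 2) := by
  have hlam : lam (n₁ ^ k) * lam (n₂ ^ k) =
      lam (Nat.gcd n₁ n₂ ^ k) ^ 2 * lam ((n₁ * n₂ / Nat.gcd n₁ n₂ ^ 2) ^ k) := by
    rw [hmult n₁ n₂ h₁ h₂, Nat.div_pow (Nat.gcd_sq_dvd_mul n₁ n₂), mul_pow, pow_mul]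
  have hrpow := Real.natCast_rpow_mul_natCast_rpow_of_mul_eq
    (Nat.mul_div_cancel' (Nat.gcd_sq_dvd_mul n₁ n₂)).symm (-((k : ℝ) * σ))
  rw [show 2 * -((k : ℝ) * σ) = -((2 * k : ℝ) * σ) by ring] at hrpow
  simp only [sqfreeWeight, sqfreeWeightSq, if_pos h₁, if_pos h₂,
    if_pos (Nat.squarefree_mul_div_gcd_sq h₁ h₂),
    if_pos (h₁.squarefree_of_dvd (Nat.gcd_dvd_left n₁ n₂))]
  rw [mul_mul_mul_comm, hlam, hrpow]
  ring

theorem sqfreeWeight_mul_le (hnonneg : ∀ n, 0 ≤ lam n)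
    (hmult : ∀ n₁ n₂ : ℕ, Squarefree n₁ → Squarefree n₂ →
      lam (n₁ ^ k) * lam (n₂ ^ k) =
        lam (Nat.gcd n₁ n₂ ^ k) ^ 2 * lam (n₁ ^ k * n₂ ^ k / Nat.gcd n₁ n₂ ^ (2 * k)))
    (n₁ n₂ : ℕ) :
    sqfreeWeight lam k σ n₁ * sqfreeWeight lam k σ n₂ ≤
      sqfreeWeightSq lam k σ (Nat.gcd n₁ n₂) *
        sqfreeWeight lam k σ (n₁ * n₂ / Nat.gcd n₁ n₂ ^ 2) := by
  by_cases h : Squarefree n₁ ∧ Squarefree n₂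
  · exact (sqfreeWeight_mul_eq hmult h.1 h.2).le
  · have hzero : sqfreeWeight lam k σ n₁ * sqfreeWeight lam k σ n₂ = 0 := by
      rcases not_and_or.mp h with h | h <;> simp [sqfreeWeight, h]
    rw [hzero]
    exact mul_nonneg (sqfreeWeightSq_nonneg _) (sqfreeWeight_nonneg hnonneg _)

end SquarefreeWeights

theorem stmt_16_general (lam : ℕ → ℝ) (k : ℕ) (σ : ℝ)
    (hnonneg : ∀ n, 0 ≤ lam n)
    (hmult : ∀ n₁ n₂ : ℕ, Squarefree n₁ → Squarefree n₂ →
      lam (n₁ ^ k) * lam (n₂ ^ k) =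
        lam (Nat.gcd n₁ n₂ ^ k) ^ 2 *
          lam (n₁ ^ k * n₂ ^ k / Nat.gcd n₁ n₂ ^ (2 * k)))
    (h1 : Summable fun d : ℕ =>
      if Squarefree d then lam (d ^ k) ^ 2 * (d : ℝ) ^ (-((2 * k : ℝ) * σ)) else 0)
    (h2 : Summable fun n : ℕ =>
      if Squarefree n then (n.divisors.card : ℝ) * lam (n ^ k) * (n : ℝ) ^ (-((k : ℝ) * σ)) else 0) :
    (∑' n : ℕ, if Squarefree n then lam (n ^ k) * (n : ℝ) ^ (-((k : ℝ) * σ)) else 0) ^ 2 ≤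
      (∑' d : ℕ, if Squarefree d then lam (d ^ k) ^ 2 * (d : ℝ) ^ (-((2 * k : ℝ) * σ)) else 0) *
        (∑' n : ℕ, if Squarefree n then (n.divisors.card : ℝ) * lam (n ^ k) * (n : ℝ) ^ (-((k : ℝ) * σ)) else 0) := by
  have hc : (fun n : ℕ => if Squarefree n then
        (n.divisors.card : ℝ) * lam (n ^ k) * (n : ℝ) ^ (-((k : ℝ) * σ)) else 0) =
      fun n => (n.divisors.card : ℝ) * sqfreeWeight lam k σ n := by
    funext n
    simp only [sqfreeWeight, mul_ite, mul_zero, mul_assoc]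
  rw [hc] at h2 ⊢
  exact sq_tsum_le_tsum_mul_tsum_card_divisors_mul (sqfreeWeight_nonneg hnonneg)
    sqfreeWeightSq_nonneg (if_neg not_squarefree_zero) (sqfreeWeight_mul_le hnonneg hmult) h1 h2

theorem stmt_16 (lam : ℕ → ℝ) (k : ℕ) (hk : 1 ≤ k) (σ : ℝ)
    (hnonneg : ∀ n, 0 ≤ lam n)
    (hmult : ∀ n₁ n₂ : ℕ, Squarefree n₁ → Squarefree n₂ →
      lam (n₁ ^ k) * lam (n₂ ^ k) =
        lam (Nat.gcd n₁ n₂ ^ k) ^ 2 *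
          lam (n₁ ^ k * n₂ ^ k / Nat.gcd n₁ n₂ ^ (2 * k)))
    (h1 : Summable fun d : ℕ =>
      if Squarefree d then lam (d ^ k) ^ 2 * (d : ℝ) ^ (-((2 * k : ℝ) * σ)) else 0)
    (h2 : Summable fun n : ℕ =>
      if Squarefree n then (n.divisors.card : ℝ) * lam (n ^ k) * (n : ℝ) ^ (-((k : ℝ) * σ)) else 0) :
    (∑' n : ℕ, if Squarefree n then lam (n ^ k) * (n : ℝ) ^ (-((k : ℝ) * σ)) else 0) ^ 2 ≤
      (∑' d : ℕ, if Squarefree d then lam (d ^ k) ^ 2 * (d : ℝ) ^ (-((2 * k : ℝ) * σ)) else 0) *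
        (∑' n : ℕ, if Squarefree n then (n.divisors.card : ℝ) * lam (n ^ k) * (n : ℝ) ^ (-((k : ℝ) * σ)) else 0) :=
  stmt_16_general lam k σ hnonneg hmult h1 h2
end

section
/- Let u ∈ ℝ, u ≠ 0, and x ≥ 2. Then for every fixed integer M ≥ 0, −∫_x^∞ y^{iu−1}/log y dy = (x^{iu}/(iu·log x))·∑_{k=0}^{M} k!/(iu·log x)^k + O_M((log x)^{−M−2}), where the integral converges as an improper (oscillatory) integral. -/
open intervalIntegral

/-!
Write `c = iu` and `L = log x`. Since `|y^c| = 1`, the integrals `∫_x^∞ y^(c-1) / (log y)^k dy`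
converge absolutely for `k ≥ 2`, with size at most `1 / ((k-1) L^(k-1))`. Integrating `y^(c-1)`
by parts gives `∫_x^∞ y^(c-1) / (log y)^k = -x^c / (c L^k) + (k/c) ∫_x^∞ y^(c-1) / (log y)^(k+1)`,
also for `k = 1`, where it defines the oscillatory integral. Iterating produces the expansion
with remainder `((M+1)! / c^(M+1)) ∫_x^∞ y^(c-1) / (log y)^(M+2)`, and one further integration by
parts bounds this tail by `2 / (|c| L^(M+2))`.
-/

open MeasureTheory Filter Set Topology

lemma norm_ofReal_cpow_div_log_pow {c : ℂ} (hc : c.re = 0) (k : ℕ) {y : ℝ} (hy : 1 < y) :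
    ‖(y : ℂ) ^ (c - 1) / (Real.log y : ℂ) ^ k‖ = 1 / (y * Real.log y ^ k) := by
  have hlog := Real.log_pos hy
  rw [norm_div, norm_pow, Complex.norm_cpow_eq_rpow_re_of_pos (by linarith), Complex.norm_real,
    Real.norm_of_nonneg hlog.le, Complex.sub_re, hc, Complex.one_re, zero_sub, Real.rpow_neg_one,
    one_div, mul_inv, div_eq_mul_inv]

lemma continuousOn_ofReal_cpow_div_log_pow (c : ℂ) (k : ℕ) :
    ContinuousOn (fun y : ℝ => (y : ℂ) ^ (c - 1) / (Real.log y : ℂ) ^ k) (Ioi 1) := by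
  intro y (hy : 1 < y)
  have hy0 : y ≠ 0 := by positivity
  refine ContinuousAt.continuousWithinAt (ContinuousAt.div ?_ ?_ ?_)
  · exact Complex.continuousAt_ofReal_cpow_const y (c - 1) (Or.inr hy0)
  · exact (Complex.continuous_ofReal.continuousAt.comp (Real.continuousAt_log hy0)).pow k
  · exact pow_ne_zero _ (Complex.ofReal_ne_zero.2 (Real.log_pos hy).ne')

lemma hasDerivAt_neg_inv_log_pow (m : ℕ) {y : ℝ} (hy : 1 < y) :
    HasDerivAt (fun z : ℝ => -(((m : ℝ) + 1) * Real.log z ^ (m + 1))⁻¹)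
      (1 / (y * Real.log y ^ (m + 2))) y := by
  have hlog := Real.log_pos hy
  have hden := ((Real.hasDerivAt_log (by positivity)).pow (m + 1)).const_mul ((m : ℝ) + 1)
  simp only [Pi.pow_apply] at hden
  refine (hden.inv (by positivity)).neg.congr_deriv ?_
  field_simp
  push_cast
  ring

lemma tendsto_neg_inv_log_pow_atTop (m : ℕ) :
    Tendsto (fun z : ℝ => -(((m : ℝ) + 1) * Real.log z ^ (m + 1))⁻¹) atTop (𝓝 0) := by
  rw [← neg_zero]
  refine (Tendsto.inv_tendsto_atTop ?_).neg
  exact (tendsto_const_mul_atTop_of_pos (by positivity)).2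
    ((tendsto_pow_atTop (Nat.succ_ne_zero m)).comp Real.tendsto_log_atTop)

lemma integrableOn_and_integral_Ioi_one_div_mul_log_pow (m : ℕ) {x : ℝ} (hx : 1 < x) :
    IntegrableOn (fun y : ℝ => 1 / (y * Real.log y ^ (m + 2))) (Ioi x) ∧
      ∫ y in Ioi x, 1 / (y * Real.log y ^ (m + 2)) = (((m : ℝ) + 1) * Real.log x ^ (m + 1))⁻¹ := by
  have hderiv : ∀ y ∈ Ici x, HasDerivAt (fun z : ℝ => -(((m : ℝ) + 1) * Real.log z ^ (m + 1))⁻¹)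
      (1 / (y * Real.log y ^ (m + 2))) y :=
    fun y hy => hasDerivAt_neg_inv_log_pow m (hx.trans_le hy)
  have hnonneg : ∀ y ∈ Ioi x, 0 ≤ 1 / (y * Real.log y ^ (m + 2)) := fun y hy => by
    have := Real.log_pos (hx.trans hy)
    have : 0 < y := by linarith [hx.trans hy]
    positivity
  refine ⟨integrableOn_Ioi_deriv_of_nonneg' hderiv hnonneg (tendsto_neg_inv_log_pow_atTop m), ?_⟩
  rw [integral_Ioi_of_hasDerivAt_of_nonneg' hderiv hnonneg (tendsto_neg_inv_log_pow_atTop m),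
    zero_sub, neg_neg]

lemma integrableOn_Ioi_ofReal_cpow_div_log_pow {c : ℂ} (hc : c.re = 0) (m : ℕ) {x : ℝ}
    (hx : 1 < x) :
    IntegrableOn (fun y : ℝ => (y : ℂ) ^ (c - 1) / (Real.log y : ℂ) ^ (m + 2)) (Ioi x) := by
  refine (integrableOn_and_integral_Ioi_one_div_mul_log_pow m hx).1.mono' ?_ ?_
  · exact ((continuousOn_ofReal_cpow_div_log_pow c (m + 2)).mono
      fun y (hy : x < y) => hx.trans hy).aestronglyMeasurable measurableSet_Ioi
  · filter_upwards [self_mem_ae_restrict measurableSet_Ioi] with y hy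
    exact (norm_ofReal_cpow_div_log_pow hc (m + 2) (hx.trans hy)).le

/-- Meaningful for `k ≥ 2` only: for `k ≤ 1` the integrand is not integrable when `c.re = 0`,
and the Bochner integral is `0`. -/
noncomputable def logPowTail (c : ℂ) (k : ℕ) (x : ℝ) : ℂ :=
  ∫ y in Ioi x, (y : ℂ) ^ (c - 1) / (Real.log y : ℂ) ^ k

lemma norm_logPowTail_le {c : ℂ} (hc : c.re = 0) (m : ℕ) {x : ℝ} (hx : 1 < x) :
    ‖logPowTail c (m + 2) x‖ ≤ (((m : ℝ) + 1) * Real.log x ^ (m + 1))⁻¹ := by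
  rw [← (integrableOn_and_integral_Ioi_one_div_mul_log_pow m hx).2]
  refine (MeasureTheory.norm_integral_le_integral_norm _).trans_eq
    (setIntegral_congr_fun measurableSet_Ioi fun y hy => ?_)
  exact norm_ofReal_cpow_div_log_pow hc (m + 2) (hx.trans hy)

lemma hasDerivAt_ofReal_cpow_div_log_pow {c : ℂ} (hc : c ≠ 0) (n : ℕ) {y : ℝ} (hy : 1 < y) :
    HasDerivAt (fun z : ℝ => (z : ℂ) ^ c / (c * (Real.log z : ℂ) ^ (n + 1)))
      ((y : ℂ) ^ (c - 1) / (Real.log y : ℂ) ^ (n + 1) -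
        ((n + 1) / c) * ((y : ℂ) ^ (c - 1) / (Real.log y : ℂ) ^ (n + 2))) y := by
  have hy0 : y ≠ 0 := by positivity
  have hlog : (Real.log y : ℂ) ≠ 0 := Complex.ofReal_ne_zero.2 (Real.log_pos hy).ne'
  have hden := (((Real.hasDerivAt_log hy0).ofReal_comp).pow (n + 1)).const_mul c
  simp only [Pi.pow_apply] at hden
  refine ((hasDerivAt_ofReal_cpow_const hy0 hc).div hden
    (mul_ne_zero hc (pow_ne_zero _ hlog))).congr_deriv ?_
  have hy0' : (y : ℂ) ≠ 0 := Complex.ofReal_ne_zero.2 hy0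
  have hcpow : (y : ℂ) ^ (c - 1) * y = (y : ℂ) ^ c := by
    rw [Complex.cpow_sub _ _ hy0', Complex.cpow_one, div_mul_cancel₀ _ hy0']
  rw [← hcpow]
  push_cast
  field_simp
  ring

lemma integral_ofReal_cpow_div_log_pow {c : ℂ} (hc : c ≠ 0) (n : ℕ) {x T : ℝ} (hx : 1 < x)
    (hT : x ≤ T) :
    ∫ y in x..T, (y : ℂ) ^ (c - 1) / (Real.log y : ℂ) ^ (n + 1) =
      (T : ℂ) ^ c / (c * (Real.log T : ℂ) ^ (n + 1)) -
        (x : ℂ) ^ c / (c * (Real.log x : ℂ) ^ (n + 1)) +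
      ((n + 1) / c) * ∫ y in x..T, (y : ℂ) ^ (c - 1) / (Real.log y : ℂ) ^ (n + 2) := by
  have hsub : uIcc x T ⊆ Ioi 1 := by
    rw [uIcc_of_le hT]
    exact fun y hy => hx.trans_le hy.1
  have hint : ∀ k, IntervalIntegrable
      (fun y : ℝ => (y : ℂ) ^ (c - 1) / (Real.log y : ℂ) ^ k) volume x T := fun k =>
    ((continuousOn_ofReal_cpow_div_log_pow c k).mono hsub).intervalIntegrable
  have hftc := intervalIntegral.integral_eq_sub_of_hasDerivAt
    (fun y hy => hasDerivAt_ofReal_cpow_div_log_pow hc n (hsub hy))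
    ((hint (n + 1)).sub ((hint (n + 2)).const_mul _))
  rw [intervalIntegral.integral_sub (hint (n + 1)) ((hint (n + 2)).const_mul _),
    intervalIntegral.integral_const_mul] at hftc
  linear_combination hftc

lemma tendsto_ofReal_cpow_div_log_pow_atTop {c : ℂ} (hc : c ≠ 0) (hre : c.re = 0) (n : ℕ) :
    Tendsto (fun T : ℝ => (T : ℂ) ^ c / (c * (Real.log T : ℂ) ^ (n + 1))) atTop (𝓝 0) := by
  rw [tendsto_zero_iff_norm_tendsto_zero]
  have hnorm : ∀ᶠ T : ℝ in atTop,
      (‖c‖ * Real.log T ^ (n + 1))⁻¹ = ‖(T : ℂ) ^ c / (c * (Real.log T : ℂ) ^ (n + 1))‖ := by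
    filter_upwards [eventually_gt_atTop 1] with T hT
    rw [norm_div, norm_mul, norm_pow, Complex.norm_cpow_eq_rpow_re_of_pos (by linarith), hre,
      Real.rpow_zero, Complex.norm_real, Real.norm_of_nonneg (Real.log_pos hT).le, one_div]
  refine Tendsto.congr' hnorm (Tendsto.inv_tendsto_atTop ?_)
  exact (tendsto_const_mul_atTop_of_pos (norm_pos_iff.2 hc)).2
    ((tendsto_pow_atTop (Nat.succ_ne_zero n)).comp Real.tendsto_log_atTop)

lemma tendsto_integral_ofReal_cpow_div_log_pow {c : ℂ} (hc : c ≠ 0) (hre : c.re = 0) (n : ℕ)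
    {x : ℝ} (hx : 1 < x) :
    Tendsto (fun T : ℝ => ∫ y in x..T, (y : ℂ) ^ (c - 1) / (Real.log y : ℂ) ^ (n + 1)) atTop
      (𝓝 (-((x : ℂ) ^ c / (c * (Real.log x : ℂ) ^ (n + 1))) +
        ((n + 1) / c) * logPowTail c (n + 2) x)) := by
  have htail := intervalIntegral_tendsto_integral_Ioi x
    (integrableOn_Ioi_ofReal_cpow_div_log_pow hre n hx) tendsto_id
  have hlim := ((tendsto_ofReal_cpow_div_log_pow_atTop hc hre n).sub_const
    ((x : ℂ) ^ c / (c * (Real.log x : ℂ) ^ (n + 1)))).add (htail.const_mul ((n + 1) / c))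
  rw [zero_sub] at hlim
  refine hlim.congr' ?_
  filter_upwards [eventually_ge_atTop x] with T hT
  exact (integral_ofReal_cpow_div_log_pow hc n hx hT).symm

lemma logPowTail_eq {c : ℂ} (hc : c ≠ 0) (hre : c.re = 0) (n : ℕ) {x : ℝ} (hx : 1 < x) :
    logPowTail c (n + 2) x = -((x : ℂ) ^ c / (c * (Real.log x : ℂ) ^ (n + 2))) +
      ((n + 2) / c) * logPowTail c (n + 3) x := by
  have h := tendsto_nhds_unique (intervalIntegral_tendsto_integral_Ioi x
    (integrableOn_Ioi_ofReal_cpow_div_log_pow hre n hx) tendsto_id)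
    (tendsto_integral_ofReal_cpow_div_log_pow hc hre (n + 1) hx)
  rw [logPowTail, h]
  push_cast
  ring

/-- One more integration by parts gains the factor `1 / |c|` from the oscillation of `y^c`,
at the cost of only a factor `2` over the trivial bound. -/
lemma norm_logPowTail_le_two_div {c : ℂ} (hc : c ≠ 0) (hre : c.re = 0) (n : ℕ) {x : ℝ}
    (hx : 1 < x) :
    ‖logPowTail c (n + 2) x‖ ≤ 2 / (‖c‖ * Real.log x ^ (n + 2)) := by
  have hlog := Real.log_pos hx
  have hc' : 0 < ‖c‖ := norm_pos_iff.2 hc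
  have hboundary : ‖(x : ℂ) ^ c / (c * (Real.log x : ℂ) ^ (n + 2))‖ =
      1 / (‖c‖ * Real.log x ^ (n + 2)) := by
    rw [norm_div, norm_mul, norm_pow, Complex.norm_cpow_eq_rpow_re_of_pos (by linarith), hre,
      Real.rpow_zero, Complex.norm_real, Real.norm_of_nonneg hlog.le]
  have hnext : ‖((n + 2) / c) * logPowTail c (n + 3) x‖ ≤ 1 / (‖c‖ * Real.log x ^ (n + 2)) := by
    have h := norm_logPowTail_le hre (n + 1) hx
    rw [norm_mul, norm_div, show ‖((n : ℂ) + 2)‖ = (n : ℝ) + 2 by norm_cast]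
    calc ((n : ℝ) + 2) / ‖c‖ * ‖logPowTail c (n + 3) x‖
        ≤ ((n : ℝ) + 2) / ‖c‖ * (((n : ℝ) + 2) * Real.log x ^ (n + 2))⁻¹ := by
          gcongr
          simpa [add_assoc, one_add_one_eq_two] using h
      _ = 1 / (‖c‖ * Real.log x ^ (n + 2)) := by field_simp
  calc ‖logPowTail c (n + 2) x‖
      ≤ ‖(x : ℂ) ^ c / (c * (Real.log x : ℂ) ^ (n + 2))‖ +
          ‖((n + 2) / c) * logPowTail c (n + 3) x‖ := by
        rw [logPowTail_eq hc hre n hx]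
        exact (norm_add_le _ _).trans_eq (by rw [norm_neg])
    _ ≤ 1 / (‖c‖ * Real.log x ^ (n + 2)) + 1 / (‖c‖ * Real.log x ^ (n + 2)) := by
        rw [hboundary]
        exact add_le_add_right hnext _
    _ = 2 / (‖c‖ * Real.log x ^ (n + 2)) := by ring

lemma neg_div_add_logPowTail_eq_sum {c : ℂ} (hc : c ≠ 0) (hre : c.re = 0) {x : ℝ} (hx : 1 < x)
    (n : ℕ) :
    -((x : ℂ) ^ c / (c * Real.log x)) + (1 / c) * logPowTail c 2 x =
      -((x : ℂ) ^ c / (c * Real.log x) *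
          ∑ k ∈ Finset.range (n + 1), (k.factorial : ℂ) / (c * Real.log x) ^ k) +
        ((n + 1).factorial / c ^ (n + 1)) * logPowTail c (n + 2) x := by
  induction n with
  | zero => simp
  | succ n ih =>
    rw [ih, logPowTail_eq hc hre n hx, Finset.sum_range_succ _ (n + 1),
      Nat.factorial_succ (n + 1)]
    push_cast
    ring

theorem stmt_19 (u : ℝ) (hu : u ≠ 0) (M : ℕ) :
    ∃ (J : ℝ → ℂ) (C : ℝ), ∀ x : ℝ, 2 ≤ x →
      (Filter.Tendsto
        (fun T : ℝ => ∫ y in x..T, (y : ℂ) ^ (Complex.I * u - 1) / (Real.log y : ℂ))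
        Filter.atTop (nhds (J x))) ∧
      ‖(-(J x)) -
          (x : ℂ) ^ (Complex.I * u) / (Complex.I * u * (Real.log x : ℂ)) *
            ∑ k ∈ Finset.range (M + 1),
              (Nat.factorial k : ℂ) / (Complex.I * u * (Real.log x : ℂ)) ^ k‖ ≤
        C * Real.log x ^ (-(M : ℝ) - 2) := by
  set c : ℂ := Complex.I * u
  have hc : c ≠ 0 := mul_ne_zero Complex.I_ne_zero (Complex.ofReal_ne_zero.2 hu)
  have hre : c.re = 0 := by simp [c]
  have hnorm : ‖c‖ = |u| := by simp [c]
  refine ⟨fun x => -((x : ℂ) ^ c / (c * Real.log x)) + (1 / c) * logPowTail c 2 x,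
    2 * (M + 1).factorial / |u| ^ (M + 2), fun x hx => ⟨?_, ?_⟩⟩
  · simpa using tendsto_integral_ofReal_cpow_div_log_pow hc hre 0 (one_lt_two.trans_le hx)
  · have hx1 : 1 < x := one_lt_two.trans_le hx
    have hlog := Real.log_pos hx1
    dsimp only
    rw [neg_div_add_logPowTail_eq_sum hc hre hx1 M, neg_add, neg_neg, add_sub_cancel_left,
      norm_neg, norm_mul, norm_div, norm_pow, hnorm, Complex.norm_natCast,
      show -(M : ℝ) - 2 = -((M + 2 : ℕ) : ℝ) by push_cast; ring, Real.rpow_neg hlog.le,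
      Real.rpow_natCast]
    calc (M + 1).factorial / |u| ^ (M + 1) * ‖logPowTail c (M + 2) x‖
        ≤ (M + 1).factorial / |u| ^ (M + 1) * (2 / (|u| * Real.log x ^ (M + 2))) := by
          gcongr
          exact hnorm ▸ norm_logPowTail_le_two_div hc hre M hx1
      _ = 2 * (M + 1).factorial / |u| ^ (M + 2) * (Real.log x ^ (M + 2))⁻¹ := by
          field_simp
          ring
end
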